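/- arXiv:2307.05190 — 3 statements merged into one kernel-verified Lean document; each statement's English description precedes it below -/
import Mathlib

section
/- Let D be a 2-(v,k,λ) design with k prime, and let G be a flag-transitive automorphism group of D. Then G is point-primitive. -/
open MulAction Set
open scoped Pointwise

/-- If `D` is a 2-(v,k,λ) design with `k` prime admitting a flag-transitive
automorphism group `G`, then `G` is point-primitive: `G` is transitive on points
and every block of imprimitivity of the action of `G` on points is trivial. -/
theorem stmt_3 {P : Type*} [Fintype P] [DecidableEq P] [Nontrivial P]
    {G : Type*} [Group G] [MulAction G P]
    (Bl : Finset (Finset P)) (k lam : ℕ)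
    (hk : ∀ b ∈ Bl, b.card = k)
    (hlam : ∀ x y : P, x ≠ y → (Bl.filter (fun b => x ∈ b ∧ y ∈ b)).card = lam)
    (hlam1 : 1 ≤ lam)
    (hkp : k.Prime)
    (haut : ∀ g : G, ∀ b ∈ Bl, b.image (fun p => g • p) ∈ Bl)
    (hflag : ∀ (x : P) (bx : Finset P), bx ∈ Bl → x ∈ bx →
      ∀ (y : P) (by' : Finset P), by' ∈ Bl → y ∈ by' →
        ∃ g : G, g • x = y ∧ bx.image (fun p => g • p) = by') :
    MulAction.IsPretransitive G P ∧
      ∀ B : Set P, MulAction.IsBlock G B → MulAction.IsTrivialBlock B := by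
  classical
  -- any two distinct points lie in a common design block
  have hbxy : ∀ x y : P, x ≠ y → ∃ b ∈ Bl, x ∈ b ∧ y ∈ b := by
    intro x y hxy
    have hc : 0 < (Bl.filter (fun b => x ∈ b ∧ y ∈ b)).card := by
      rw [hlam x y hxy]; omega
    obtain ⟨b, hb⟩ := Finset.card_pos.mp hc
    rw [Finset.mem_filter] at hb
    exact ⟨b, hb.1, hb.2⟩
  -- every point lies in some design block
  have hbx : ∀ x : P, ∃ b ∈ Bl, x ∈ b := by
    intro x
    obtain ⟨y, hy⟩ := exists_ne x
    obtain ⟨b, hb, hxb, -⟩ := hbxy x y (Ne.symm hy)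
    exact ⟨b, hb, hxb⟩
  have htrans : MulAction.IsPretransitive G P := by
    constructor
    intro x y
    obtain ⟨bx, hbx', hxbx⟩ := hbx x
    obtain ⟨by', hby', hyby⟩ := hbx y
    obtain ⟨g, hg, -⟩ := hflag x bx hbx' hxbx y by' hby' hyby
    exact ⟨g, hg⟩
  refine ⟨htrans, ?_⟩
  intro B hB
  by_contra hcon
  rw [MulAction.IsTrivialBlock, not_or, Set.not_subsingleton_iff] at hcon
  obtain ⟨⟨x₀, hx₀, y₀, hy₀, hxy₀⟩, hnu⟩ := hcon
  obtain ⟨z, hz⟩ : ∃ z, z ∉ B := by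
    by_contra h; push_neg at h; exact hnu (Set.eq_univ_of_forall h)
  -- every point lies in a translate of B
  have hcov : ∀ p : P, ∃ g : G, p ∈ g • B := by
    intro p
    obtain ⟨g, hg⟩ := htrans.exists_smul_eq x₀ p
    exact ⟨g, hg ▸ Set.smul_mem_smul_set hx₀⟩
  -- the class of a point: the translate of B containing it
  set Cl : P → Set P := fun p => (hcov p).choose • B with hCldef
  have hmemCl : ∀ p, p ∈ Cl p := fun p => (hcov p).choose_spec
  have huniq : ∀ p : P, ∀ g : G, p ∈ g • B → g • B = Cl p := by
    intro p g hp
    exact hB.smul_eq_smul_of_nonempty ⟨p, hp, hmemCl p⟩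
  have hClB : ∀ p ∈ B, Cl p = B := by
    intro p hp
    have h1 : p ∈ (1 : G) • B := by simpa using hp
    have := huniq p 1 h1
    simpa using this.symm
  have hClsmul : ∀ (g : G) (p : P), Cl (g • p) = g • Cl p := by
    intro g p
    have h1 : g • p ∈ (g * (hcov p).choose) • B := by
      rw [mul_smul]; exact Set.smul_mem_smul_set (hmemCl p)
    have h2 := huniq (g • p) _ h1
    rw [← h2, hCldef, mul_smul]
  have hmem_iff : ∀ p q : P, q ∈ Cl p → Cl q = Cl p := by
    intro p q hq
    exact (huniq q _ hq).symm
  -- the key counting lemma: intersections of design blocks with classes of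
  -- their points all have the same size
  have hcount : ∀ b ∈ Bl, ∀ x ∈ b, ∀ b' ∈ Bl, ∀ y ∈ b',
      (b.filter (fun p => p ∈ Cl x)).card = (b'.filter (fun p => p ∈ Cl y)).card := by
    intro b hb x hx b' hb' y hy
    obtain ⟨g, hgx, hgb⟩ := hflag x b hb hx y b' hb' hy
    have hCly : Cl y = g • Cl x := by rw [← hgx, hClsmul]
    have key : b'.filter (fun p => p ∈ Cl y) =
        (b.filter (fun p => p ∈ Cl x)).image (fun p => g • p) := by
      rw [← hgb, Finset.filter_image]
      congr 1
      apply Finset.filter_congr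
      intro p _
      rw [hCly]
      exact ⟨fun h => (Set.smul_mem_smul_set_iff).mp h,
             fun h => Set.smul_mem_smul_set h⟩
    rw [key, Finset.card_image_of_injective _ (MulAction.injective g)]
  -- a design block through x₀ and y₀
  obtain ⟨b₁, hb₁, hx₀b₁, hy₀b₁⟩ := hbxy x₀ y₀ hxy₀
  set d := (b₁.filter (fun p => p ∈ Cl x₀)).card with hd
  have hd2 : 2 ≤ d := by
    have hsub : ({x₀, y₀} : Finset P) ⊆ b₁.filter (fun p => p ∈ Cl x₀) := by
      intro p hp
      rw [Finset.mem_insert, Finset.mem_singleton] at hp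
      rcases hp with rfl | rfl
      · exact Finset.mem_filter.mpr ⟨hx₀b₁, hmemCl p⟩
      · exact Finset.mem_filter.mpr ⟨hy₀b₁, by rw [hClB x₀ hx₀]; exact hy₀⟩
    calc 2 = ({x₀, y₀} : Finset P).card := by
            rw [Finset.card_insert_of_notMem (by simpa using hxy₀), Finset.card_singleton]
      _ ≤ _ := Finset.card_le_card hsub
  have hdvd : d ∣ k := by
    have hfib := Finset.card_eq_sum_card_fiberwise
      (f := Cl) (s := b₁) (t := b₁.image Cl) (fun x hx => Finset.mem_image_of_mem _ hx)
    have heach : ∀ c ∈ b₁.image Cl, (b₁.filter (fun p => Cl p = c)).card = d := by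
      intro c hc
      obtain ⟨x, hxb, rfl⟩ := Finset.mem_image.mp hc
      have hfe : b₁.filter (fun p => Cl p = Cl x) = b₁.filter (fun p => p ∈ Cl x) := by
        apply Finset.filter_congr
        intro p _
        constructor
        · intro h; rw [← h]; exact hmemCl p
        · intro h; exact hmem_iff x p h
      rw [hfe, hd]
      exact hcount b₁ hb₁ x hxb b₁ hb₁ x₀ hx₀b₁
    rw [Finset.sum_congr rfl heach, Finset.sum_const, smul_eq_mul] at hfib
    exact ⟨(Finset.image Cl b₁).card, by rw [← hk b₁ hb₁, hfib, mul_comm]⟩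
  have hdk : d = k := by
    rcases (Nat.Prime.eq_one_or_self_of_dvd hkp d hdvd) with h | h
    · omega
    · exact h
  -- a design block through x₀ and z
  have hx₀z : x₀ ≠ z := fun h => hz (h ▸ hx₀)
  obtain ⟨b₂, hb₂, hx₀b₂, hzb₂⟩ := hbxy x₀ z hx₀z
  have hc2 : (b₂.filter (fun p => p ∈ Cl x₀)).card = b₂.card := by
    rw [hk b₂ hb₂, ← hdk, hd]
    exact hcount b₂ hb₂ x₀ hx₀b₂ b₁ hb₁ x₀ hx₀b₁
  have hfull : b₂.filter (fun p => p ∈ Cl x₀) = b₂ :=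
    Finset.eq_of_subset_of_card_le (Finset.filter_subset _ _) (le_of_eq hc2.symm)
  have hzmem : z ∈ Cl x₀ := by
    have := hfull ▸ hzb₂
    exact (Finset.mem_filter.mp this).2
  rw [hClB x₀ hx₀] at hzmem
  exact hz hzmem
end

section
/- Let D be a 2-(v,k,λ) design admitting a flag-transitive automorphism group G. Then v-1 divides gcd(k-1, v-1)·d for every nontrivial subdegree d of G. -/
/-- If `D` is a 2-(v,k,λ) design admitting a flag-transitive automorphism group
`G`, then `v - 1` divides `gcd(k-1, v-1) * d` for every nontrivial subdegree `d`
of `G`, i.e. for the length `d` of the orbit of the stabiliser `G_α` on any point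
`β ≠ α`. -/
theorem stmt_5 {P : Type*} [Fintype P] [DecidableEq P]
    {G : Type*} [Group G] [Finite G] [MulAction G P]
    (Bl : Finset (Finset P)) (k r lam : ℕ)
    (hk : ∀ b ∈ Bl, b.card = k)
    (hr : ∀ x : P, (Bl.filter (fun b => x ∈ b)).card = r)
    (hlam : ∀ x y : P, x ≠ y → (Bl.filter (fun b => x ∈ b ∧ y ∈ b)).card = lam)
    (hlam1 : 1 ≤ lam)
    (haut : ∀ g : G, ∀ b ∈ Bl, b.image (fun p => g • p) ∈ Bl)
    (hflag : ∀ (x : P) (bx : Finset P), bx ∈ Bl → x ∈ bx →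
      ∀ (y : P) (by' : Finset P), by' ∈ Bl → y ∈ by' →
        ∃ g : G, g • x = y ∧ bx.image (fun p => g • p) = by')
    (α β : P) (hβ : β ≠ α) :
    (Fintype.card P - 1) ∣
      Nat.gcd (k - 1) (Fintype.card P - 1) *
        Nat.card (MulAction.orbit (MulAction.stabilizer G α) β) := by
  classical
  set v := Fintype.card P with hv
  set Blα := Bl.filter (fun b => α ∈ b) with hBlα
  have hBlαcard : Blα.card = r := hr α
  -- orbit as a finset
  set Δ : Finset P := (MulAction.orbit (MulAction.stabilizer G α) β).toFinset with hΔ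
  have hd : Nat.card (MulAction.orbit (MulAction.stabilizer G α) β) = Δ.card := by
    rw [Nat.card_eq_card_toFinset]
  set d := Δ.card with hdd
  -- orbit membership is stable under stabilizer elements
  have horbit : ∀ g : G, g • α = α → ∀ y : P,
      y ∈ MulAction.orbit (MulAction.stabilizer G α) β →
      g • y ∈ MulAction.orbit (MulAction.stabilizer G α) β := by
    intro g hg y hy
    obtain ⟨h, hh⟩ := hy
    refine ⟨(⟨g, hg⟩ : MulAction.stabilizer G α) * h, ?_⟩
    show ((⟨g, hg⟩ : MulAction.stabilizer G α) * h) • β = g • y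
    have h1 : ((⟨g, hg⟩ : MulAction.stabilizer G α) * h) • β = (g * (h : G)) • β := rfl
    have h2 : (h : G) • β = y := hh
    rw [h1, mul_smul, h2]
  have hΔim : ∀ g : G, g • α = α → Δ.image (fun p => g • p) = Δ := by
    intro g hg
    apply Finset.ext
    intro z
    simp only [Finset.mem_image, hΔ, Set.mem_toFinset]
    constructor
    · rintro ⟨y, hy, rfl⟩
      exact horbit g hg y hy
    · intro hz
      refine ⟨g⁻¹ • z, ?_, by simp⟩
      have := horbit g⁻¹ (by rw [inv_smul_eq_iff, hg]) z hz
      exact this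
  -- points in Δ differ from α
  have hΔne : ∀ y ∈ Δ, y ≠ α := by
    intro y hy
    rw [hΔ, Set.mem_toFinset] at hy
    obtain ⟨h, hh⟩ := hy
    intro hyα
    apply hβ
    have hstab : (h : G) • α = α := h.2
    have h2 : (h : G) • β = y := hh
    rw [hyα] at h2
    exact MulAction.injective (h : G) (h2.trans hstab.symm)
  -- double counting helper
  have hcount : ∀ s : Finset P, (∀ y ∈ s, y ≠ α) →
      lam * s.card = ∑ b ∈ Blα, (s.filter (fun y => y ∈ b)).card := by
    intro s hs
    have h1 : ∀ y ∈ s, (Blα.filter (fun b => y ∈ b)).card = lam := by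
      intro y hy
      rw [hBlα, Finset.filter_filter]
      rw [← hlam α y (Ne.symm (hs y hy))]
    calc lam * s.card = ∑ y ∈ s, (Blα.filter (fun b => y ∈ b)).card := by
          rw [Finset.sum_congr rfl h1, Finset.sum_const, smul_eq_mul, mul_comm]
      _ = ∑ y ∈ s, ∑ b ∈ Blα, if y ∈ b then 1 else 0 := by
          simp only [Finset.card_filter]
      _ = ∑ b ∈ Blα, ∑ y ∈ s, if y ∈ b then 1 else 0 := Finset.sum_comm
      _ = ∑ b ∈ Blα, (s.filter (fun y => y ∈ b)).card := by
          simp only [Finset.card_filter]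
  -- Step A : lam * (v - 1) = r * (k - 1)
  have hA : lam * (v - 1) = r * (k - 1) := by
    have hcard : (Finset.univ.erase α).card = v - 1 := by
      rw [Finset.card_erase_of_mem (Finset.mem_univ α), Finset.card_univ]
    have := hcount (Finset.univ.erase α) (fun y hy => (Finset.mem_erase.mp hy).1)
    rw [hcard] at this
    rw [this, ← hBlαcard, Finset.card_eq_sum_ones Blα, Finset.sum_mul, one_mul]
    apply Finset.sum_congr rfl
    intro b hb
    rw [hBlα, Finset.mem_filter] at hb
    have : (Finset.univ.erase α).filter (fun y => y ∈ b) = b.erase α := by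
      ext y; simp [Finset.mem_erase, and_comm]
    rw [this, Finset.card_erase_of_mem hb.2, hk b hb.1]
  -- Step B : lam * d = r * c for some c
  have hexb : ∃ b₀, b₀ ∈ Blα := by
    have := hlam α β (Ne.symm hβ)
    have hpos : 0 < (Bl.filter (fun b => α ∈ b ∧ β ∈ b)).card := by omega
    obtain ⟨b₀, hb₀⟩ := Finset.card_pos.mp hpos
    rw [Finset.mem_filter] at hb₀
    exact ⟨b₀, Finset.mem_filter.mpr ⟨hb₀.1, hb₀.2.1⟩⟩
  obtain ⟨b₀, hb₀⟩ := hexb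
  have hb₀' := Finset.mem_filter.mp hb₀
  have hconst : ∀ b ∈ Blα, (Δ.filter (fun y => y ∈ b)).card
      = (Δ.filter (fun y => y ∈ b₀)).card := by
    intro b hb
    have hb' := Finset.mem_filter.mp hb
    obtain ⟨g, hgα, hgb⟩ := hflag α b hb'.1 hb'.2 α b₀ hb₀'.1 hb₀'.2
    have hinj : Function.Injective (fun p : P => g • p) := MulAction.injective g
    have : (Δ.filter (fun y => y ∈ b)).image (fun p => g • p)
        = Δ.filter (fun y => y ∈ b₀) := by
      rw [Finset.filter_mem_eq_inter, Finset.filter_mem_eq_inter,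
        Finset.image_inter _ _ hinj, hΔim g hgα, hgb]
    rw [← this, Finset.card_image_of_injective _ hinj]
  have hB : lam * d = r * (Δ.filter (fun y => y ∈ b₀)).card := by
    rw [hcount Δ hΔne, Finset.sum_congr rfl hconst, Finset.sum_const, smul_eq_mul, hBlαcard]
  set c := (Δ.filter (fun y => y ∈ b₀)).card with hc
  -- deduce (v-1) ∣ (k-1) * d
  have hkey : (v - 1) ∣ (k - 1) * d := by
    have h1 : lam * ((k - 1) * d) = lam * ((v - 1) * c) := by
      calc lam * ((k - 1) * d) = (lam * d) * (k - 1) := by ring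
        _ = r * (k - 1) * c := by rw [hB]; ring
        _ = lam * (v - 1) * c := by rw [hA]
        _ = lam * ((v - 1) * c) := by ring
    have := Nat.eq_of_mul_eq_mul_left (by omega : 0 < lam) h1
    exact ⟨c, this⟩
  rw [hd]
  have h2 : (v - 1) ∣ (v - 1) * d := Dvd.intro d rfl
  have := Nat.dvd_gcd hkey h2
  rwa [Nat.gcd_mul_right] at this
end

section
/- If c ≥ 5 is an integer such that c(c-1)/2 - 1 divides gcd(6, c(c-1)/2 - 1) · 2(c-2), then c ∈ {5, 7, 11, 23}. -/
/-- If `c ≥ 5` is an integer such that `c(c-1)/2 - 1` divides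
`gcd(6, c(c-1)/2 - 1) · 2(c-2)`, then `c ∈ {5, 7, 11, 23}`. -/
theorem stmt_11 (c : ℕ) (hc : 5 ≤ c)
    (h : c * (c - 1) / 2 - 1 ∣ Nat.gcd 6 (c * (c - 1) / 2 - 1) * (2 * (c - 2))) :
    c ∈ ({5, 7, 11, 23} : Set ℕ) := by
  have hdvd : c * (c - 1) / 2 - 1 ∣ 6 * (2 * (c - 2)) :=
    h.trans (Nat.mul_dvd_mul_right (Nat.gcd_dvd_left 6 _) _)
  have hle : c * (c - 1) / 2 - 1 ≤ 6 * (2 * (c - 2)) :=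
    Nat.le_of_dvd (by omega) hdvd
  have heven : 2 ∣ c * (c - 1) := by
    have := (Nat.even_mul_succ_self (c - 1)).two_dvd
    have e : (c - 1) * (c - 1 + 1) = c * (c - 1) := by
      have : c - 1 + 1 = c := by omega
      rw [this]; ring
    rwa [e] at this
  have hc23 : c ≤ 23 := by
    by_contra hgt
    push_neg at hgt
    obtain ⟨k, hk⟩ := heven
    have hthis : c * (c - 1) / 2 = k := by omega
    have h1 : k ≤ 12 * c - 23 := by omega
    obtain ⟨d, rfl⟩ : ∃ d, c = d + 24 := ⟨c - 24, by omega⟩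
    have e : d + 24 - 1 = d + 23 := by omega
    rw [e] at hk
    have h1' : k ≤ 12 * d + 265 := by omega
    nlinarith [hk, h1']
  interval_cases c <;> simp_all <;> omega
end
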